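/- Let G be a group, g ≥ 2 an integer, and {T_k}_{k ∈ ℤ/(8g−4)ℤ} elements of G satisfying T_{σ(k)} T_k = 1 and T_{ρ³(k)} T_{ρ²(k)} T_{ρ(k)} T_k = 1 for all k, where ρ(k) = σ(k)+1. Then for all k: T_k⁻¹ T_{σ(k)+1}⁻¹ = T_{k−1}⁻¹ T_{σ(k)+4g−2}⁻¹ (indices mod 8g−4). -/

import Mathlib

def sigmaZ (g : ℕ) (k : ZMod (8 * g - 4)) : ZMod (8 * g - 4) :=
  if Odd k.val then 4 * (g : ZMod (8 * g - 4)) - k else 2 - k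

def rhoZ (g : ℕ) (k : ZMod (8 * g - 4)) : ZMod (8 * g - 4) := sigmaZ g k + 1

/-!
The inverse relation turns the cycle relation at `k` into
`(T k)⁻¹ * (T (ρ k))⁻¹ = (T (σ ρ³ k))⁻¹ * (T (σ ρ² k))⁻¹`, an identity valid for arbitrary index maps.
It remains to compute `σ ρ² k = σ k + 4g - 2` and `σ ρ³ k = k - 1`: since `σ` preserves and `ρ`
flips the parity of an index, both follow by splitting on the parity of `k`, using `8g = 4`.
-/

theorem inv_mul_inv_eq_of_cycle {ι G : Type*} [Group G] (σ ρ : ι → ι) (T : ι → G)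
    (hinv : ∀ k, T (σ k) * T k = 1)
    (hcycle : ∀ k, T (ρ (ρ (ρ k))) * T (ρ (ρ k)) * T (ρ k) * T k = 1) (k : ι) :
    (T k)⁻¹ * (T (ρ k))⁻¹ = (T (σ (ρ (ρ (ρ k)))))⁻¹ * (T (σ (ρ (ρ k))))⁻¹ := by
  simp only [eq_inv_of_mul_eq_one_left (hinv _), inv_inv, ← mul_inv_rev]
  exact (eq_inv_of_mul_eq_one_left (by simpa only [mul_assoc] using hcycle k)).symm

namespace SigmaZ

variable {g : ℕ}

def parity (g : ℕ) : ZMod (8 * g - 4) →+* ZMod 2 :=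
  ZMod.castHom (by omega : 2 ∣ 8 * g - 4) (ZMod 2)

theorem odd_val_iff [NeZero (8 * g - 4)] (k : ZMod (8 * g - 4)) :
    Odd k.val ↔ parity g k = 1 := by
  rw [parity, ZMod.castHom_apply, ZMod.cast_eq_val, ZMod.natCast_eq_one_iff_odd]

theorem parity_eq_zero_or_one (k : ZMod (8 * g - 4)) : parity g k = 0 ∨ parity g k = 1 := by
  generalize parity g k = p
  decide +revert

theorem parity_four_mul_natCast : parity g (4 * g) = 0 := by
  rw [map_mul, map_natCast, map_ofNat, show (4 : ZMod 2) = 0 by decide, zero_mul]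

theorem eight_mul_natCast [NeZero (8 * g - 4)] : 8 * (g : ZMod (8 * g - 4)) = 4 := by
  have hg : 4 ≤ 8 * g := by have := NeZero.ne (8 * g - 4); omega
  have h := ZMod.natCast_self (8 * g - 4)
  push_cast [Nat.cast_sub hg] at h
  linear_combination h

variable [NeZero (8 * g - 4)] {k : ZMod (8 * g - 4)}

theorem sigmaZ_of_parity_zero (hk : parity g k = 0) : sigmaZ g k = 2 - k := by
  rw [sigmaZ, if_neg (by rw [odd_val_iff, hk]; decide)]

theorem sigmaZ_of_parity_one (hk : parity g k = 1) : sigmaZ g k = 4 * g - k := by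
  rw [sigmaZ, if_pos ((odd_val_iff k).2 hk)]

theorem parity_sigmaZ (k : ZMod (8 * g - 4)) : parity g (sigmaZ g k) = parity g k := by
  rcases parity_eq_zero_or_one k with hk | hk
  · rw [sigmaZ_of_parity_zero hk, map_sub, map_ofNat, hk]; decide
  · rw [sigmaZ_of_parity_one hk, map_sub, parity_four_mul_natCast, hk]; decide

theorem parity_rhoZ (k : ZMod (8 * g - 4)) : parity g (rhoZ g k) = parity g k + 1 := by
  rw [rhoZ, map_add, map_one, parity_sigmaZ]

theorem sigmaZ_rhoZ_rhoZ (k : ZMod (8 * g - 4)) :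
    sigmaZ g (rhoZ g (rhoZ g k)) = sigmaZ g k + 4 * g - 2 := by
  have hρ := parity_rhoZ k
  have hρρ := parity_rhoZ (rhoZ g k)
  rcases parity_eq_zero_or_one k with hk | hk <;> rw [hk] at hρ <;> rw [hρ] at hρρ
  · rw [sigmaZ_of_parity_zero (by rw [hρρ]; decide), rhoZ,
      sigmaZ_of_parity_one (by rw [hρ]; decide), rhoZ, sigmaZ_of_parity_zero hk]
    linear_combination -eight_mul_natCast (g := g)
  · rw [sigmaZ_of_parity_one (by rw [hρρ]; decide), rhoZ,
      sigmaZ_of_parity_zero (by rw [hρ]; decide), rhoZ, sigmaZ_of_parity_one hk]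
    ring

theorem sigmaZ_rhoZ_rhoZ_rhoZ (k : ZMod (8 * g - 4)) :
    sigmaZ g (rhoZ g (rhoZ g (rhoZ g k))) = k - 1 := by
  have hρρρ : parity g (rhoZ g (rhoZ g (rhoZ g k))) = parity g k + 1 := by
    rw [parity_rhoZ, parity_rhoZ, parity_rhoZ, add_assoc, add_assoc, CharTwo.add_self_eq_zero,
      add_zero]
  rcases parity_eq_zero_or_one k with hk | hk <;> rw [hk] at hρρρ
  · rw [sigmaZ_of_parity_one (by rw [hρρρ]; decide), rhoZ, sigmaZ_rhoZ_rhoZ,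
      sigmaZ_of_parity_zero hk]
    ring
  · rw [sigmaZ_of_parity_zero (by rw [hρρρ]; decide), rhoZ, sigmaZ_rhoZ_rhoZ,
      sigmaZ_of_parity_one hk]
    linear_combination -eight_mul_natCast (g := g)

end SigmaZ

open SigmaZ in
theorem generator_relation {G : Type*} [Group G] (g : ℕ) (hg : 2 ≤ g)
    (T : ZMod (8 * g - 4) → G)
    (hinv : ∀ k, T (sigmaZ g k) * T k = 1)
    (hcycle : ∀ k, T (rhoZ g (rhoZ g (rhoZ g k))) * T (rhoZ g (rhoZ g k)) * T (rhoZ g k) * T k = 1) :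
    ∀ k, (T k)⁻¹ * (T (sigmaZ g k + 1))⁻¹
      = (T (k - 1))⁻¹ * (T (sigmaZ g k + 4 * (g : ZMod (8 * g - 4)) - 2))⁻¹ := by
  have : NeZero (8 * g - 4) := ⟨by omega⟩
  intro k
  rw [← sigmaZ_rhoZ_rhoZ_rhoZ, ← sigmaZ_rhoZ_rhoZ]
  exact inv_mul_inv_eq_of_cycle (sigmaZ g) (rhoZ g) T hinv hcycle k
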